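/- arXiv:1705.10065 — 5 statements merged into one kernel-verified Lean document; each statement's English description precedes it below -/
import Mathlib

section
/- For any base b ≥ 2, any letters x, y ∈ {1,...,b-1}, and any word u over {0,...,b-1}, the number of words in L_b occurring as scattered subwords of x0yu equals the number of words in L_b occurring as scattered subwords of xyu plus the number of words in L_b occurring as scattered subwords of yu. -/
/-- Number of distinct words in `L_b` (no leading zero, or empty) occurring as
scattered subwords (subsequences) of `u`. -/
def lbCount (u : List ℕ) : ℕ :=
  ((u.sublists.filter (fun v => v.head? ≠ some 0)).dedup).length

/-- `S_b(n)`: number of distinct words of `L_b` occurring as scattered subwords of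
the base-`b` expansion of `n` (most significant digit first, `rep_b(0) = ε`). -/
def Sb (b n : ℕ) : ℕ := lbCount ((Nat.digits b n).reverse)

/-- Summatory function `A_b(n) = ∑_{j<n} S_b(j)`. -/
def Asum (b n : ℕ) : ℕ := ∑ j ∈ Finset.range n, Sb b j

/-!
A subword of `a w` is either `a` followed by a subword of `w`, or a subword of `w` not starting
with `a`, and not both. Hence the distinct subwords satisfy
`|S(a w)| = |S(w)| + #{v ∈ S(w) | v does not start with a}`, so `|S(0 w)| = |S(w)| + |L(w)|`.
For `x ≠ 0` the same splitting gives `L(x w) = x S(w) ⊔ {v ∈ L(w) | v does not start with x}`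
and `L(x 0 w) = x S(0 w) ⊔ {v ∈ L(w) | v does not start with x}`, as a word not starting
with `0` is a subword of `0 w` only if it is one of `w`. The difference is
`|S(0 w)| - |S(w)| = |L(w)|`.
-/

open Finset

variable {α : Type*} [DecidableEq α]

def List.subwordFinset (w : List α) : Finset (List α) := w.sublists.toFinset

@[simp]
lemma List.mem_subwordFinset {v w : List α} : v ∈ w.subwordFinset ↔ v.Sublist w := by
  simp [subwordFinset]

lemma List.subwordFinset_cons (a : α) (w : List α) :
    (a :: w).subwordFinset =
      w.subwordFinset.image (a :: ·) ∪ w.subwordFinset.filter (·.head? ≠ some a) := by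
  ext v
  simp only [List.mem_subwordFinset, Finset.mem_union, Finset.mem_image, Finset.mem_filter,
    List.sublist_cons_iff]
  constructor
  · rintro (hv | ⟨r, rfl, hr⟩)
    · by_cases hhead : v.head? = some a
      · exact Or.inl
          ⟨v.tail, (List.tail_sublist v).trans hv, (List.eq_cons_of_mem_head? hhead).symm⟩
      · exact Or.inr ⟨hv, hhead⟩
    · exact Or.inl ⟨r, hr, rfl⟩
  · rintro (⟨r, hr, rfl⟩ | ⟨hv, _⟩)
    · exact Or.inr ⟨r, rfl, hr⟩
    · exact Or.inl hv

lemma disjoint_image_cons_filter_head_ne (a : α) (s t : Finset (List α)) :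
    Disjoint (s.image (a :: ·)) (t.filter (·.head? ≠ some a)) := by
  simp only [Finset.disjoint_left, Finset.mem_image, Finset.mem_filter]
  rintro _ ⟨r, _, rfl⟩ ⟨_, hhead⟩
  exact hhead rfl

lemma List.card_subwordFinset_cons (a : α) (w : List α) :
    (a :: w).subwordFinset.card =
      w.subwordFinset.card + (w.subwordFinset.filter (·.head? ≠ some a)).card := by
  rw [List.subwordFinset_cons, card_union_of_disjoint (disjoint_image_cons_filter_head_ne a _ _),
    card_image_of_injective _ List.cons_injective]

lemma List.filter_subwordFinset_cons_head_ne (a : α) (w : List α) :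
    (a :: w).subwordFinset.filter (·.head? ≠ some a) =
      w.subwordFinset.filter (·.head? ≠ some a) := by
  rw [List.subwordFinset_cons, Finset.filter_union, Finset.filter_filter,
    Finset.filter_false_of_mem]
  · simp only [and_self, empty_union]
  · simp

lemma List.card_filter_subwordFinset_cons_head_ne {a z : α} (haz : a ≠ z) (w : List α) :
    ((a :: w).subwordFinset.filter (·.head? ≠ some z)).card =
      w.subwordFinset.card +
        ((w.subwordFinset.filter (·.head? ≠ some z)).filter (·.head? ≠ some a)).card := by
  rw [List.subwordFinset_cons, Finset.filter_union, Finset.filter_true_of_mem,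
    Finset.filter_comm, card_union_of_disjoint (disjoint_image_cons_filter_head_ne a _ _),
    card_image_of_injective _ List.cons_injective]
  simp [haz]

lemma lbCount_eq_card (w : List ℕ) :
    lbCount w = (w.subwordFinset.filter (·.head? ≠ some 0)).card := by
  rw [lbCount, ← List.card_toFinset, List.toFinset_filter]
  simp [List.subwordFinset]

theorem stmt2_general (x y : ℕ) (hx : 1 ≤ x) (u : List ℕ) :
    lbCount (x :: 0 :: y :: u) =
      lbCount (x :: y :: u) + lbCount (y :: u) := by
  have hx0 : x ≠ 0 := by omega
  simp only [lbCount_eq_card, List.card_filter_subwordFinset_cons_head_ne hx0,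
    List.card_subwordFinset_cons, List.filter_subwordFinset_cons_head_ne]
  ring

theorem stmt2 (b x y : ℕ) (hb : 2 ≤ b) (hx : 1 ≤ x) (hxb : x < b)
    (hy : 1 ≤ y) (hyb : y < b) (u : List ℕ) (hu : ∀ d ∈ u, d < b) :
    lbCount (x :: 0 :: y :: u) =
      lbCount (x :: y :: u) + lbCount (y :: u) :=
  stmt2_general x y hx u
end

section
/- For any base b ≥ 2, any letters x, y ∈ {1,...,b-1}, and any word u over {0,...,b-1}, the number of words in L_b occurring as scattered subwords of xxyu equals twice the number of words in L_b occurring as scattered subwords of xyu minus the number of words in L_b occurring as scattered subwords of yu. -/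
/-!
Prepending a nonzero letter `x` does not change the set of scattered subwords starting with `0`,
so `lbCount w` differs from the number of all distinct subwords of `w` by the same amount for `w`,
`x w` and `x x w`. For all distinct subwords, `Sub(x x w) = Sub(x w) ∪ x·Sub(x w)` with intersection
`x·Sub(w)`, since `x t` is a subword of `x w` exactly when `t` is a subword of `w`.
-/

namespace List

variable {α : Type*} [DecidableEq α]

def subwords (w : List α) : Finset (List α) := w.sublists.toFinset

@[simp]
theorem mem_subwords {v w : List α} : v ∈ w.subwords ↔ v <+ w := by
  simp [subwords]

theorem subwords_cons (a : α) (w : List α) :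
    (a :: w).subwords = w.subwords ∪ w.subwords.image (a :: ·) := by
  ext v
  simp only [mem_subwords, Finset.mem_union, Finset.mem_image, sublist_cons_iff]
  grind

theorem subwords_cons_inter_image_cons (a : α) (w : List α) :
    (a :: w).subwords ∩ (a :: w).subwords.image (a :: ·) = w.subwords.image (a :: ·) := by
  ext v
  simp only [Finset.mem_inter, mem_subwords, Finset.mem_image]
  constructor
  · rintro ⟨hv, t, -, rfl⟩
    exact ⟨t, cons_sublist_cons.1 hv, rfl⟩
  · rintro ⟨t, ht, rfl⟩
    exact ⟨cons_sublist_cons.2 ht, t, ht.cons a, rfl⟩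

theorem card_subwords_cons_cons (a : α) (w : List α) :
    (a :: a :: w).subwords.card + w.subwords.card = 2 * (a :: w).subwords.card := by
  have h := Finset.card_union_add_card_inter (a :: w).subwords ((a :: w).subwords.image (a :: ·))
  rw [← subwords_cons, subwords_cons_inter_image_cons] at h
  simp only [Finset.card_image_of_injective _ (cons_injective (a := a))] at h
  omega

theorem filter_head_eq_subwords_cons {a z : α} (h : a ≠ z) (w : List α) :
    (a :: w).subwords.filter (·.head? = some z) = w.subwords.filter (·.head? = some z) := by
  ext v
  simp only [Finset.mem_filter, mem_subwords, sublist_cons_iff]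
  constructor
  · rintro ⟨hv | ⟨r, rfl, -⟩, hz⟩
    · exact ⟨hv, hz⟩
    · exact absurd (Option.some.inj hz) h
  · rintro ⟨hv, hz⟩
    exact ⟨Or.inl hv, hz⟩

end List

theorem lbCount_add_card_filter_head_eq_zero (w : List ℕ) :
    lbCount w + (w.subwords.filter (·.head? = some 0)).card = w.subwords.card := by
  have h : lbCount w = (w.subwords.filter (·.head? ≠ some 0)).card := by
    rw [lbCount, List.subwords, ← List.card_toFinset, List.toFinset_filter]
    simp
  rw [h, add_comm]
  exact Finset.card_filter_add_card_filter_not _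

theorem lbCount_cons_cons {x : ℕ} (hx : x ≠ 0) (w : List ℕ) :
    lbCount (x :: x :: w) + lbCount w = 2 * lbCount (x :: w) := by
  have h₂ := lbCount_add_card_filter_head_eq_zero (x :: x :: w)
  have h₁ := lbCount_add_card_filter_head_eq_zero (x :: w)
  have h₀ := lbCount_add_card_filter_head_eq_zero w
  simp only [List.filter_head_eq_subwords_cons hx] at h₂ h₁
  have := List.card_subwords_cons_cons x w
  omega

theorem stmt3_general (x y : ℕ) (hx : 1 ≤ x) (u : List ℕ) :
    (lbCount (x :: x :: y :: u) : ℤ) =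
      2 * lbCount (x :: y :: u) - lbCount (y :: u) := by
  have h := lbCount_cons_cons (x := x) (by omega) (y :: u)
  omega

theorem stmt3 (b x y : ℕ) (hb : 2 ≤ b) (hx : 1 ≤ x) (hxb : x < b)
    (hy : 1 ≤ y) (hyb : y < b) (u : List ℕ) (hu : ∀ d ∈ u, d < b) :
    (lbCount (x :: x :: y :: u) : ℤ) =
      2 * lbCount (x :: y :: u) - lbCount (y :: u) :=
  stmt3_general x y hx u
end

section
/- For all b ≥ 2, all x ∈ {1,...,b-1}, all ℓ ≥ 1, and all r with 0 ≤ r < b^{ℓ-1}, one has S_b(x·b^ℓ + r) = S_b(x·b^{ℓ-1} + r) + S_b(r). -/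
/-!
Sort the subwords of `x 0 v` (with `x ≠ 0`) by their first letter: those starting with `x` are
`x w` for the subwords `w` of `0 v`, the others are subwords of `0 v` not starting with `0` or `x`,
that is, subwords of `v`. Since the subwords of `0 v` are those of `v` together with `0 w` for every
subword `w` of `v`, inserting the `0` adds exactly the subwords of `v` without leading zero.
In base `b`, `x b^ℓ + r` reads `x 0 0^k rep_b(r)` and `x b^(ℓ-1) + r` reads `x 0^k rep_b(r)`;
leading zeros never contribute, which gives the recurrence.
-/

open Finset

section Subwords

variable {α : Type*} [DecidableEq α]

def subwords (u : List α) : Finset (List α) := u.sublists.toFinset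

@[simp]
theorem mem_subwords {u w : List α} : w ∈ subwords u ↔ w.Sublist u := by
  simp [subwords]

theorem card_filter_subwords_cons (p : List α → Prop) [DecidablePred p] (a : α) (u : List α) :
    #{w ∈ subwords (a :: u) | p w} =
      #{w ∈ subwords u | p w ∧ w.head? ≠ some a} + #{w ∈ subwords u | p (a :: w)} := by
  have hsplit : {w ∈ subwords (a :: u) | p w} =
      {w ∈ subwords u | p w ∧ w.head? ≠ some a} ∪
        {w ∈ subwords u | p (a :: w)}.image (a :: ·) := by
    ext (_ | ⟨c, w⟩)
    · simp
    · by_cases hc : c = a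
      · subst hc; simp
      · simp [hc, Ne.symm hc, List.sublist_cons_iff]
  rw [hsplit, card_union_of_disjoint, card_image_of_injective _ List.cons_injective]
  simp only [disjoint_left, mem_filter, mem_image]
  rintro _ ⟨_, _, hw⟩ ⟨w, _, rfl⟩
  simp at hw

theorem card_filter_head_ne_subwords_cons_self (a : α) (u : List α) :
    #{w ∈ subwords (a :: u) | w.head? ≠ some a} = #{w ∈ subwords u | w.head? ≠ some a} := by
  simp [card_filter_subwords_cons]

theorem card_subwords_cons (a : α) (u : List α) :
    #(subwords (a :: u)) = #{w ∈ subwords u | w.head? ≠ some a} + #(subwords u) := by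
  simpa using card_filter_subwords_cons (fun _ => True) a u

theorem card_filter_head_ne_subwords_replicate_append (a : α) (k : ℕ) (u : List α) :
    #{w ∈ subwords (List.replicate k a ++ u) | w.head? ≠ some a} =
      #{w ∈ subwords u | w.head? ≠ some a} := by
  induction k with
  | zero => rfl
  | succ k ih =>
    rw [List.replicate_succ, List.cons_append, card_filter_head_ne_subwords_cons_self, ih]

theorem card_filter_head_ne_subwords_cons_cons {a x : α} (hx : x ≠ a) (v : List α) :
    #{w ∈ subwords (x :: a :: v) | w.head? ≠ some a} =
      #{w ∈ subwords (x :: v) | w.head? ≠ some a} +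
        #{w ∈ subwords v | w.head? ≠ some a} := by
  have hsplit (u : List α) : #{w ∈ subwords (x :: u) | w.head? ≠ some a} =
      #{w ∈ subwords u | w.head? ≠ some a ∧ w.head? ≠ some x} + #(subwords u) := by
    simp [card_filter_subwords_cons, hx]
  have hdrop : #{w ∈ subwords (a :: v) | w.head? ≠ some a ∧ w.head? ≠ some x} =
      #{w ∈ subwords v | w.head? ≠ some a ∧ w.head? ≠ some x} := by
    simp [card_filter_subwords_cons, and_comm]
  rw [hsplit, hsplit, hdrop, card_subwords_cons]
  ring

end Subwords

theorem lbCount_eq_card_filter_subwords (u : List ℕ) :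
    lbCount u = #{w ∈ subwords u | w.head? ≠ some 0} := by
  rw [lbCount, ← List.card_toFinset, List.toFinset_filter, subwords]
  simp

theorem digits_mul_pow_add {b x m r : ℕ} (hb : 1 < b) (hx : x ≠ 0) (hxb : x < b)
    (hr : r < b ^ m) :
    Nat.digits b (x * b ^ m + r) =
      Nat.digits b r ++ List.replicate (m - (Nat.digits b r).length) 0 ++ [x] := by
  have hlen : (Nat.digits b r).length ≤ m := (Nat.digits_length_le_iff hb r).2 hr
  rw [← Nat.digits_of_lt b x hx hxb,
    Nat.digits_append_zeroes_append_digits hb (Nat.pos_of_ne_zero hx),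
    Nat.add_sub_cancel' hlen, add_comm, mul_comm]

theorem Sb_mul_pow_add {b x m r : ℕ} (hb : 1 < b) (hx : x ≠ 0) (hxb : x < b)
    (hr : r < b ^ m) :
    Sb b (x * b ^ m + r) =
      #{w ∈ subwords (x :: (List.replicate (m - (Nat.digits b r).length) 0 ++
        (Nat.digits b r).reverse)) | w.head? ≠ some 0} := by
  simp [Sb, lbCount_eq_card_filter_subwords, digits_mul_pow_add hb hx hxb hr]

theorem stmt5 (b x ℓ r : ℕ) (hb : 2 ≤ b) (hx : 1 ≤ x) (hxb : x < b)
    (hℓ : 1 ≤ ℓ) (hr : r < b ^ (ℓ - 1)) :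
    Sb b (x * b ^ ℓ + r) = Sb b (x * b ^ (ℓ - 1) + r) + Sb b r := by
  have hx0 : x ≠ 0 := Nat.one_le_iff_ne_zero.1 hx
  have hrℓ : r < b ^ ℓ := hr.trans_le (Nat.pow_le_pow_right (by omega) (Nat.sub_le ℓ 1))
  have hlen : (Nat.digits b r).length ≤ ℓ - 1 := (Nat.digits_length_le_iff hb r).2 hr
  have hzeros : ℓ - (Nat.digits b r).length = (ℓ - 1 - (Nat.digits b r).length) + 1 := by omega
  rw [Sb_mul_pow_add hb hx0 hxb hrℓ, Sb_mul_pow_add hb hx0 hxb hr, hzeros, List.replicate_succ,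
    List.cons_append, card_filter_head_ne_subwords_cons_cons hx0,
    card_filter_head_ne_subwords_replicate_append, Sb, lbCount_eq_card_filter_subwords]
end

section
/- For every n ≥ 0: S_2(2n+1) = 3·S_2(n) − S_2(2n), S_2(4n) = −S_2(n) + 2·S_2(2n), and S_2(4n+2) = 4·S_2(n) − S_2(2n). -/
/-!
Sort the subwords of a binary word `u` that lie in `L_2` (call them valid) by their last
letter: if `a` of them end in `0` and `b` in `1`, then `S = 1 + a + b`. Appending `0` to `u`
turns the nonempty valid subwords into the new ones ending in `0` and keeps those ending in
`1`, so `(a, b) ↦ (a + b, b)`; appending `1` turns all valid subwords into the ones ending in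
`1`, so `(a, b) ↦ (a, S)`. Hence `S(2n) = S(n) + b(n)`, `S(2n+1) = 2 S(n) - b(n)`,
`b(2n) = b(n)` and `b(2n+1) = S(n)`, and eliminating `b` gives the three identities.
-/

def lbSubwords (u : List ℕ) : Finset (List ℕ) :=
  (u.sublists.filter (fun v => v.head? ≠ some 0)).toFinset

def lbSubwordsEndingWith (d : ℕ) (u : List ℕ) : Finset (List ℕ) :=
  {v ∈ lbSubwords u | v.getLast? = some d}

lemma mem_lbSubwords {u v : List ℕ} : v ∈ lbSubwords u ↔ v.Sublist u ∧ v.head? ≠ some 0 := by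
  simp [lbSubwords]

lemma lbCount_eq_card_lbSubwords (u : List ℕ) : lbCount u = (lbSubwords u).card := by
  rw [lbCount, lbSubwords, List.card_toFinset]

lemma nil_mem_lbSubwords (u : List ℕ) : [] ∈ lbSubwords u := by
  simp [mem_lbSubwords]

lemma card_lbSubwords_eq_one_add_sum {b : ℕ} {u : List ℕ} (hu : ∀ x ∈ u, x < b) :
    (lbSubwords u).card = 1 + ∑ d ∈ Finset.range b, (lbSubwordsEndingWith d u).card := by
  have hmaps : Set.MapsTo List.getLast? (lbSubwords u)
      ((insert none ((Finset.range b).image some) : Finset (Option ℕ)) : Set (Option ℕ)) := by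
    intro v hv
    cases h : v.getLast? with
    | none => simp
    | some d =>
      have hd : d ∈ u := (mem_lbSubwords.mp hv).1.subset (List.mem_of_getLast? h)
      simpa using hu d hd
  have hnil : {v ∈ lbSubwords u | v.getLast? = none} = {[]} := by
    ext v
    simp only [Finset.mem_filter, List.getLast?_eq_none_iff, Finset.mem_singleton]
    exact ⟨fun h => h.2, fun h => ⟨h ▸ nil_mem_lbSubwords u, h⟩⟩
  rw [Finset.card_eq_sum_card_fiberwise hmaps, Finset.sum_insert (by simp),
    Finset.sum_image (by simp), hnil, Finset.card_singleton]
  rfl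

lemma lbSubwordsEndingWith_concat_self (d : ℕ) (u : List ℕ) :
    lbSubwordsEndingWith d (u ++ [d]) =
      {v ∈ lbSubwords u | (v ++ [d]).head? ≠ some 0}.image (· ++ [d]) := by
  ext w
  simp only [lbSubwordsEndingWith, Finset.mem_filter, Finset.mem_image, mem_lbSubwords]
  constructor
  · rintro ⟨⟨hsub, hhead⟩, hlast⟩
    obtain ⟨v, rfl⟩ := List.getLast?_eq_some_iff.mp hlast
    refine ⟨v, ⟨⟨(List.append_sublist_append_right _).mp hsub, ?_⟩, hhead⟩, rfl⟩
    cases v <;> simp_all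
  · rintro ⟨v, ⟨⟨hsub, -⟩, hhead⟩, rfl⟩
    exact ⟨⟨(List.append_sublist_append_right _).mpr hsub, hhead⟩, by simp⟩

lemma lbSubwordsEndingWith_concat_of_ne {d e : ℕ} (hde : d ≠ e) (u : List ℕ) :
    lbSubwordsEndingWith d (u ++ [e]) = lbSubwordsEndingWith d u := by
  ext w
  simp only [lbSubwordsEndingWith, Finset.mem_filter, mem_lbSubwords]
  refine ⟨fun ⟨⟨hsub, hhead⟩, hlast⟩ => ⟨⟨?_, hhead⟩, hlast⟩,
    fun ⟨⟨hsub, hhead⟩, hlast⟩ => ⟨⟨hsub.trans (List.sublist_append_left u [e]), hhead⟩, hlast⟩⟩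
  obtain ⟨w₁, w₂, rfl, hw₁, hw₂⟩ := List.sublist_append_iff.mp hsub
  rcases List.sublist_singleton.mp hw₂ with rfl | rfl
  · simpa using hw₁
  · simp [hde.symm] at hlast

lemma card_lbSubwordsEndingWith_concat_self_of_ne_zero {d : ℕ} (hd : d ≠ 0) (u : List ℕ) :
    (lbSubwordsEndingWith d (u ++ [d])).card = (lbSubwords u).card := by
  have hvalid : {v ∈ lbSubwords u | (v ++ [d]).head? ≠ some 0} = lbSubwords u :=
    Finset.filter_true_of_mem fun v hv => by
      cases v <;> simp_all [mem_lbSubwords]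
  rw [lbSubwordsEndingWith_concat_self, hvalid,
    Finset.card_image_of_injective _ (List.append_left_injective [d])]

lemma card_lbSubwordsEndingWith_zero_concat_zero (u : List ℕ) :
    (lbSubwordsEndingWith 0 (u ++ [0])).card + 1 = (lbSubwords u).card := by
  have hvalid : {v ∈ lbSubwords u | (v ++ [0]).head? ≠ some 0} = (lbSubwords u).erase [] := by
    ext v
    cases v <;> simp [mem_lbSubwords]
  rw [lbSubwordsEndingWith_concat_self, hvalid,
    Finset.card_image_of_injective _ (List.append_left_injective [0]),
    Finset.card_erase_add_one (nil_mem_lbSubwords u)]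

def SbEndingWith (b d n : ℕ) : ℕ := (lbSubwordsEndingWith d (Nat.digits b n).reverse).card

lemma Sb_eq_card_lbSubwords (b n : ℕ) : Sb b n = (lbSubwords (Nat.digits b n).reverse).card :=
  lbCount_eq_card_lbSubwords _

lemma Sb_eq_one_add_sum {b : ℕ} (hb : 1 < b) (n : ℕ) :
    Sb b n = 1 + ∑ d ∈ Finset.range b, SbEndingWith b d n :=
  (Sb_eq_card_lbSubwords b n).trans <| card_lbSubwords_eq_one_add_sum fun _ hx =>
    Nat.digits_lt_base hb (List.mem_reverse.mp hx)

lemma reverse_digits_add_mul {b x : ℕ} (hb : 1 < b) (hxb : x < b) {n : ℕ} (hxn : x ≠ 0 ∨ n ≠ 0) :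
    (Nat.digits b (x + b * n)).reverse = (Nat.digits b n).reverse ++ [x] := by
  rw [Nat.digits_add b hb x n hxb hxn, List.reverse_cons]

lemma SbEndingWith_add_mul_of_ne {b d x : ℕ} (hb : 1 < b) (hxb : x < b) (hdx : d ≠ x) {n : ℕ}
    (hxn : x ≠ 0 ∨ n ≠ 0) : SbEndingWith b d (x + b * n) = SbEndingWith b d n := by
  rw [SbEndingWith, reverse_digits_add_mul hb hxb hxn, lbSubwordsEndingWith_concat_of_ne hdx,
    SbEndingWith]

lemma SbEndingWith_add_mul_self {b d : ℕ} (hb : 1 < b) (hdb : d < b) (hd : d ≠ 0) (n : ℕ) :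
    SbEndingWith b d (d + b * n) = Sb b n := by
  rw [SbEndingWith, reverse_digits_add_mul hb hdb (.inl hd),
    card_lbSubwordsEndingWith_concat_self_of_ne_zero hd, Sb_eq_card_lbSubwords]

lemma SbEndingWith_zero_mul_add_one {b n : ℕ} (hb : 1 < b) (hn : n ≠ 0) :
    SbEndingWith b 0 (b * n) + 1 = Sb b n := by
  have h := reverse_digits_add_mul hb (by omega : 0 < b) (.inr hn)
  rw [zero_add] at h
  rw [SbEndingWith, h, card_lbSubwordsEndingWith_zero_concat_zero, Sb_eq_card_lbSubwords]

lemma Sb_two_eq (n : ℕ) : Sb 2 n = 1 + SbEndingWith 2 0 n + SbEndingWith 2 1 n := by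
  rw [Sb_eq_one_add_sum Nat.one_lt_two, Finset.sum_range_succ, Finset.sum_range_one, add_assoc]

lemma SbEndingWith_two_one_two_mul (n : ℕ) : SbEndingWith 2 1 (2 * n) = SbEndingWith 2 1 n := by
  rcases eq_or_ne n 0 with rfl | hn
  · rfl
  · simpa using SbEndingWith_add_mul_of_ne Nat.one_lt_two two_pos one_ne_zero (.inr hn)

lemma SbEndingWith_two_one_two_mul_add_one (n : ℕ) : SbEndingWith 2 1 (2 * n + 1) = Sb 2 n := by
  rw [add_comm]
  exact SbEndingWith_add_mul_self Nat.one_lt_two Nat.one_lt_two one_ne_zero n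

lemma Sb_two_mul (n : ℕ) : Sb 2 (2 * n) = Sb 2 n + SbEndingWith 2 1 n := by
  rcases eq_or_ne n 0 with rfl | hn
  · decide
  · have hS := Sb_two_eq (2 * n)
    have h0 := SbEndingWith_zero_mul_add_one Nat.one_lt_two hn
    have h1 := SbEndingWith_two_one_two_mul n
    omega

lemma Sb_two_mul_add_one (n : ℕ) : Sb 2 (2 * n + 1) + SbEndingWith 2 1 n = 2 * Sb 2 n := by
  have hS := Sb_two_eq n
  have hS' := Sb_two_eq (2 * n + 1)
  have h0 : SbEndingWith 2 0 (2 * n + 1) = SbEndingWith 2 0 n := by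
    rw [add_comm]
    exact SbEndingWith_add_mul_of_ne Nat.one_lt_two Nat.one_lt_two zero_ne_one (.inl one_ne_zero)
  have h1 := SbEndingWith_two_one_two_mul_add_one n
  omega

theorem stmt9 (n : ℕ) :
    ((Sb 2 (2 * n + 1) : ℤ) = 3 * Sb 2 n - Sb 2 (2 * n)) ∧
    ((Sb 2 (4 * n) : ℤ) = -(Sb 2 n : ℤ) + 2 * Sb 2 (2 * n)) ∧
    ((Sb 2 (4 * n + 2) : ℤ) = 4 * Sb 2 n - Sb 2 (2 * n)) := by
  have h2n := Sb_two_mul n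
  have h2n1 := Sb_two_mul_add_one n
  have h4n : Sb 2 (4 * n) = Sb 2 (2 * n) + SbEndingWith 2 1 n := by
    rw [show 4 * n = 2 * (2 * n) by ring, Sb_two_mul, SbEndingWith_two_one_two_mul]
  have h4n2 : Sb 2 (4 * n + 2) = Sb 2 (2 * n + 1) + Sb 2 n := by
    rw [show 4 * n + 2 = 2 * (2 * n + 1) by ring, Sb_two_mul,
      SbEndingWith_two_one_two_mul_add_one]
  omega
end

section
/- For all b ≥ 2, all ℓ ≥ 1, and all x, y ∈ {1,...,b−1}: A_b(x·b^ℓ + y·b^{ℓ-1}) = (4xb − 2x + 4y − 2b)·(2b−1)^{ℓ-1} if y ≤ x, and A_b(x·b^ℓ + y·b^{ℓ-1}) = (4xb − 2x + 4y − 2b − 1)·(2b−1)^{ℓ-1} if y > x. -/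
/-!
Let `w` be a word with digits `< b` and `r < b`. The allowed subwords of `w ++ [r]` are those of
`w` together with the words `s ++ [r]`, `s` an allowed subword of `w` (with `s ≠ []` if `r = 0`);
the two families overlap exactly in the allowed subwords of `w` ending in `r`. Summed over `r < b`
the overlaps count every nonempty allowed subword of `w` once, so
`∑_{r<b} S_b(w r) = (2b - 1) S_b(w)`, i.e. `A_b(N b) = (2b - 1) A_b(N)`. Hence
`A_b(x b^ℓ + y b^(ℓ-1)) = (2b - 1)^(ℓ-1) A_b(x b + y)`, and `A_b(x b + y)` is an explicit count over
one- and two-digit numbers.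
-/

open Finset

def allowedSubwords (w : List ℕ) : Finset (List ℕ) :=
  (w.sublists.filter (fun v => v.head? ≠ some 0)).toFinset

theorem mem_allowedSubwords {w v : List ℕ} :
    v ∈ allowedSubwords w ↔ v.Sublist w ∧ v.head? ≠ some 0 := by
  simp [allowedSubwords]

theorem lbCount_eq_card_allowedSubwords (w : List ℕ) : lbCount w = #(allowedSubwords w) :=
  (List.card_toFinset _).symm

@[simp]
theorem nil_mem_allowedSubwords (w : List ℕ) : [] ∈ allowedSubwords w := by
  simp [mem_allowedSubwords]

theorem List.head?_ne_of_head?_append_ne {α : Type*} {s l : List α} {a : α}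
    (h : (s ++ l).head? ≠ some a) : s.head? ≠ some a := by
  cases s <;> simp_all

theorem allowedSubwords_singleton {x : ℕ} (hx : x ≠ 0) : allowedSubwords [x] = {[], [x]} := by
  ext v
  simp only [mem_allowedSubwords, List.sublist_singleton, mem_insert, mem_singleton]
  rcases eq_or_ne v [] with rfl | hv <;> simp_all

theorem allowedSubwords_concat (w : List ℕ) (r : ℕ) :
    allowedSubwords (w ++ [r]) = allowedSubwords w ∪
      {s ∈ allowedSubwords w | (s ++ [r]).head? ≠ some 0}.image (· ++ [r]) := by
  ext t
  simp only [allowedSubwords, List.sublists_concat, List.filter_append, List.toFinset_append,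
    List.filter_map, mem_union, List.mem_toFinset, List.mem_filter, List.mem_map, mem_image,
    mem_filter, Function.comp_def, List.mem_sublists, decide_eq_true_eq]
  constructor
  · rintro (h | ⟨s, ⟨hs, hr⟩, rfl⟩)
    · exact Or.inl h
    · exact Or.inr ⟨s, ⟨⟨hs, List.head?_ne_of_head?_append_ne hr⟩, hr⟩, rfl⟩
  · rintro (h | ⟨s, ⟨⟨hs, -⟩, hr⟩, rfl⟩)
    · exact Or.inl h
    · exact Or.inr ⟨s, ⟨hs, hr⟩, rfl⟩

theorem card_filter_concat_allowed_add_ite (w : List ℕ) (r : ℕ) :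
    #{s ∈ allowedSubwords w | (s ++ [r]).head? ≠ some 0} + (if r = 0 then 1 else 0)
      = #(allowedSubwords w) := by
  have hneg : {s ∈ allowedSubwords w | ¬(s ++ [r]).head? ≠ some 0} =
      if r = 0 then {[]} else ∅ := by
    ext s
    cases s with
    | nil => split_ifs <;> simp_all
    | cons a s => split_ifs <;> simp_all [mem_allowedSubwords]
  rw [← card_filter_add_card_filter_not (s := allowedSubwords w)
    (fun s => (s ++ [r]).head? ≠ some 0), hneg]
  split_ifs <;> rfl

theorem allowedSubwords_inter_image_concat (w : List ℕ) (r : ℕ) :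
    allowedSubwords w ∩ {s ∈ allowedSubwords w | (s ++ [r]).head? ≠ some 0}.image (· ++ [r])
      = {t ∈ allowedSubwords w | t.getLast? = some r} := by
  ext t
  simp only [mem_inter, mem_image, mem_filter]
  constructor
  · rintro ⟨ht, s, -, rfl⟩
    exact ⟨ht, List.getLast?_concat⟩
  · rintro ⟨ht, hlast⟩
    obtain ⟨hsub, hhead⟩ := mem_allowedSubwords.1 ht
    have hsplit := List.dropLast_append_getLast? r hlast
    rw [← hsplit] at hhead
    exact ⟨ht, t.dropLast, ⟨mem_allowedSubwords.2 ⟨(List.dropLast_sublist t).trans hsub,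
      List.head?_ne_of_head?_append_ne hhead⟩, hhead⟩, hsplit⟩

theorem lbCount_concat (w : List ℕ) (r : ℕ) :
    lbCount (w ++ [r]) + #{t ∈ allowedSubwords w | t.getLast? = some r}
      + (if r = 0 then 1 else 0) = 2 * lbCount w := by
  have hunion := card_union_add_card_inter (allowedSubwords w)
    ({s ∈ allowedSubwords w | (s ++ [r]).head? ≠ some 0}.image (· ++ [r]))
  rw [← allowedSubwords_concat, allowedSubwords_inter_image_concat,
    card_image_of_injective _ (List.append_left_injective [r])] at hunion
  have := card_filter_concat_allowed_add_ite w r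
  rw [lbCount_eq_card_allowedSubwords, lbCount_eq_card_allowedSubwords]
  omega

theorem sum_card_getLast_add_one {b : ℕ} {w : List ℕ} (hw : ∀ d ∈ w, d < b) :
    ∑ r ∈ range b, #{t ∈ allowedSubwords w | t.getLast? = some r} + 1 = lbCount w := by
  have hmaps : Set.MapsTo List.getLast? (allowedSubwords w : Set (List ℕ))
      (insertNone (range b) : Set (Option ℕ)) := by
    intro t ht
    simp only [mem_coe, mem_insertNone, Option.mem_def, mem_range]
    exact fun d hd => hw d ((mem_allowedSubwords.1 ht).1.subset (List.mem_of_getLast? hd))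
  have hnone : {t ∈ allowedSubwords w | t.getLast? = none} = {[]} := by
    ext t
    simp only [mem_filter, mem_singleton, List.getLast?_eq_none_iff]
    exact ⟨And.right, fun h => ⟨h ▸ nil_mem_allowedSubwords w, h⟩⟩
  rw [lbCount_eq_card_allowedSubwords, card_eq_sum_card_fiberwise hmaps, sum_insertNone, hnone,
    card_singleton, add_comm]

theorem sum_lbCount_concat {b : ℕ} (hb : 0 < b) {w : List ℕ} (hw : ∀ d ∈ w, d < b) :
    ∑ r ∈ range b, lbCount (w ++ [r]) = (2 * b - 1) * lbCount w := by
  have h := sum_congr rfl fun r (_ : r ∈ range b) => lbCount_concat w r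
  simp only [sum_add_distrib, sum_ite_eq', mem_range, hb, if_true, sum_const, card_range,
    smul_eq_mul] at h
  have := sum_card_getLast_add_one hw
  rw [Nat.sub_one_mul]
  apply Nat.eq_sub_of_add_eq
  linarith

theorem Sb_mul_add {b n r : ℕ} (hb : 2 ≤ b) (hr : r < b) :
    Sb b (n * b + r) = lbCount ((Nat.digits b n).reverse ++ [r]) := by
  by_cases h : r = 0 ∧ n = 0
  -- `Nat.digits b 0 = []` rather than `[0]`, but a leading `0` adds no allowed subword.
  · obtain ⟨rfl, rfl⟩ := h
    simp only [Sb, zero_mul, add_zero, Nat.digits_zero, List.reverse_nil, List.nil_append]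
    decide
  · rw [Sb, mul_comm, add_comm, Nat.digits_add b hb r n hr (by tauto), List.reverse_cons]

theorem sum_Sb_mul_add {b : ℕ} (hb : 2 ≤ b) (n : ℕ) :
    ∑ r ∈ range b, Sb b (n * b + r) = (2 * b - 1) * Sb b n :=
  (sum_congr rfl fun _ hr => Sb_mul_add hb (mem_range.1 hr)).trans <|
    sum_lbCount_concat (by omega) fun _ hd => Nat.digits_lt_base hb (List.mem_reverse.1 hd)

theorem Asum_mul_base {b : ℕ} (hb : 2 ≤ b) (N : ℕ) :
    Asum b (N * b) = (2 * b - 1) * Asum b N := by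
  induction N with
  | zero => simp [Asum]
  | succ N ih =>
    rw [add_one_mul, Asum, sum_range_add, ← Asum, ih, sum_Sb_mul_add hb, Asum, Asum,
      sum_range_succ, mul_add]

theorem Asum_mul_pow {b : ℕ} (hb : 2 ≤ b) (N k : ℕ) :
    Asum b (N * b ^ k) = (2 * b - 1) ^ k * Asum b N := by
  induction k with
  | zero => simp
  | succ k ih => rw [pow_succ, ← mul_assoc, Asum_mul_base hb, ih, pow_succ', mul_assoc]

theorem Sb_of_ne_zero_of_lt {b x : ℕ} (hx : x ≠ 0) (hxb : x < b) : Sb b x = 2 := by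
  rw [Sb, Nat.digits_of_lt b x hx hxb, List.reverse_singleton, lbCount_eq_card_allowedSubwords,
    allowedSubwords_singleton hx]
  simp

theorem Asum_succ_of_lt {b m : ℕ} (hm : m < b) : Asum b (m + 1) = 2 * m + 1 := by
  rw [Asum, sum_range_succ', sum_congr rfl fun r hr => Sb_of_ne_zero_of_lt r.succ_ne_zero
    (by have := mem_range.1 hr; omega)]
  simp only [Sb, Nat.digits_zero, List.reverse_nil, sum_const, card_range, smul_eq_mul]
  rw [show lbCount [] = 1 by decide]
  ring

theorem Sb_two_digits {b x r : ℕ} (hb : 2 ≤ b) (hx : x ≠ 0) (hxb : x < b) (hr : r < b) :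
    Sb b (x * b + r) + (if r = 0 then 1 else 0) + (if r = x then 1 else 0) = 4 := by
  have h := lbCount_concat [x] r
  rw [Sb_mul_add hb hr, Nat.digits_of_lt b x hx hxb, List.reverse_singleton]
  have hlast : #{t ∈ allowedSubwords [x] | t.getLast? = some r} = if r = x then 1 else 0 := by
    rw [allowedSubwords_singleton hx]
    simp only [filter_insert, filter_singleton, List.getLast?_nil, reduceCtorEq, if_false,
      List.getLast?_singleton, Option.some_inj]
    by_cases hrx : r = x
    · simp [hrx]
    · simp [hrx, Ne.symm hrx]
  have h2 : lbCount [x] = 2 := by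
    rw [lbCount_eq_card_allowedSubwords, allowedSubwords_singleton hx]
    simp
  omega

theorem Asum_two_digits {b x y : ℕ} (hb : 2 ≤ b) (hx : x ≠ 0) (hxb : x < b) (hy : y ≠ 0)
    (hyb : y < b) :
    (Asum b (x * b + y) : ℤ) = 4 * x * b - 2 * x + 4 * y - 2 * b - if x < y then 1 else 0 := by
  have hlow : ∑ r ∈ range y, Sb b (x * b + r) + 1 + (if x < y then 1 else 0) = 4 * y := by
    have h := sum_congr rfl fun r (hr : r ∈ range y) =>
      Sb_two_digits hb hx hxb ((mem_range.1 hr).trans hyb)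
    simp only [sum_add_distrib, sum_ite_eq', mem_range, Nat.pos_of_ne_zero hy, if_true,
      sum_const, card_range, smul_eq_mul] at h
    omega
  obtain ⟨m, rfl⟩ : ∃ m, x = m + 1 := ⟨x - 1, by omega⟩
  rw [Asum, sum_range_add, ← Asum, Asum_mul_base hb, Asum_succ_of_lt hxb.le]
  split_ifs at hlow ⊢ <;>
  · push_cast [Nat.cast_sub (by omega : 1 ≤ 2 * b)]
    zify at hlow
    linear_combination hlow

theorem stmt15 (b ℓ x y : ℕ) (hb : 2 ≤ b) (hℓ : 1 ≤ ℓ)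
    (hx : 1 ≤ x) (hxb : x < b) (hy : 1 ≤ y) (hyb : y < b) :
    (if y ≤ x then
      (Asum b (x * b ^ ℓ + y * b ^ (ℓ - 1)) : ℤ) =
        (4 * x * b - 2 * x + 4 * y - 2 * b) * (2 * b - 1) ^ (ℓ - 1)
    else
      (Asum b (x * b ^ ℓ + y * b ^ (ℓ - 1)) : ℤ) =
        (4 * x * b - 2 * x + 4 * y - 2 * b - 1) * (2 * b - 1) ^ (ℓ - 1)) := by
  obtain ⟨k, rfl⟩ := Nat.exists_eq_add_of_le' hℓ
  have hsplit : x * b ^ (k + 1) + y * b ^ (k + 1 - 1) = (x * b + y) * b ^ k := by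
    rw [Nat.add_sub_cancel, pow_succ]
    ring
  rw [hsplit, Asum_mul_pow hb, Nat.cast_mul, Asum_two_digits hb (by omega) hxb (by omega) hyb,
    Nat.add_sub_cancel]
  push_cast [Nat.cast_sub (by omega : 1 ≤ 2 * b)]
  split_ifs <;> first | omega | ring
end
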